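/- arXiv:2502.03477 — 2 statements merged into one kernel-verified Lean document; each statement's English description precedes it below -/
import Mathlib

section
/- Bayesian inversion of a composite kernel: let p be a distribution on a finite type X, f : X → Y → [0,1] and g : Y → Z → [0,1] kernels, and let (f;g)(x)(z) := ∑_y f x y · g y z. Suppose for a fixed z₀ the evidence ∑_x p(x)·(f;g)(x)(z₀) is positive, and suppose the intermediate evidence ∑_x p(x)·f x y is positive for every y with g y z₀ ≠ 0. Then the Bayesian inverse of f;g at z₀ with respect to p equals the composite of the Bayesian inverse of g at z₀ with respect to p;f, followed by the Bayesian inverse of f with respect to p, i.e. (f;g)†(p)(z₀)(x) = ∑_y g†(p;f)(z₀)(y) · f†(p)(y)(x), where f†(p)(y)(x) := p(x)·f x y / ∑_{x'} p(x')·f x' y. -/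
open Finset

/-- Bayesian inversion of a composite kernel: `(f;g)†(p)(z₀) = g†(p;f)(z₀) ; f†(p)`. -/
theorem bayesian_inversion_composite {X Y Z : Type*} [Fintype X] [Fintype Y] [Fintype Z]
    (p : X → ℝ) (f : X → Y → ℝ) (g : Y → Z → ℝ) (z₀ : Z)
    (hp0 : ∀ x, 0 ≤ p x) (hp1 : ∑ x, p x = 1)
    (hf0 : ∀ x y, 0 ≤ f x y) (hf1 : ∀ x, ∑ y, f x y ≤ 1)
    (hg0 : ∀ y z, 0 ≤ g y z) (hg1 : ∀ y, ∑ z, g y z ≤ 1)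
    (hZ : 0 < ∑ x, p x * (∑ y, f x y * g y z₀))
    (hint : ∀ y, g y z₀ ≠ 0 → 0 < ∑ x, p x * f x y) :
    ∀ x, p x * (∑ y, f x y * g y z₀) / (∑ x', p x' * (∑ y, f x' y * g y z₀)) =
      ∑ y, ((∑ x', p x' * f x' y) * g y z₀ /
              (∑ y', (∑ x', p x' * f x' y') * g y' z₀)) *
            (p x * f x y / ∑ x', p x' * f x' y) := by
  intro x
  have hD : (∑ x', p x' * (∑ y, f x' y * g y z₀)) =
      ∑ y', (∑ x', p x' * f x' y') * g y' z₀ := by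
    simp_rw [Finset.mul_sum, Finset.sum_mul]
    rw [Finset.sum_comm]
    simp [mul_assoc]
  rw [hD, Finset.mul_sum, Finset.sum_div]
  refine Finset.sum_congr rfl fun y _ => ?_
  by_cases hg : g y z₀ = 0
  · simp [hg]
  · have hE : (∑ x', p x' * f x' y) ≠ 0 := (hint y hg).ne'
    have hDne : (∑ y', (∑ x', p x' * f x' y') * g y' z₀) ≠ 0 := by
      rw [← hD]; exact hZ.ne'
    field_simp
end

section
/- Existence of conditionals in subStoch: for any kernel f : X → (Y × Z) → [0,1] on finite types with rows of mass at most 1, there exists a kernel c : X × Y → Z → [0,1] with rows of mass at most 1 such that for all x, y, z: f x (y,z) = (∑_{z'} f x (y,z')) · c (x,y) z. (Take c(x,y)(z) := f x (y,z) / ∑_{z'} f x (y,z') when the marginal is positive, and any fixed subdistribution otherwise.) -/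
open Finset

/-- Existence of conditionals in `subStoch`: every substochastic kernel
`f : X → Y × Z` factors through its first marginal via a conditional kernel
`c : X × Y → Z`. -/
theorem conditionals_exist {X Y Z : Type*} [Fintype X] [Fintype Y] [Fintype Z]
    (f : X → Y × Z → ℝ)
    (hf0 : ∀ x p, 0 ≤ f x p) (hf1 : ∀ x, ∑ p : Y × Z, f x p ≤ 1) :
    ∃ c : X × Y → Z → ℝ,
      (∀ q z, 0 ≤ c q z) ∧ (∀ q, ∑ z, c q z ≤ 1) ∧
      ∀ x y z, f x (y, z) = (∑ z', f x (y, z')) * c (x, y) z := by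
  refine ⟨fun q z => f q.1 (q.2, z) / ∑ z', f q.1 (q.2, z'), ?_, ?_, ?_⟩
  · intro q z
    exact div_nonneg (hf0 _ _) (Finset.sum_nonneg fun _ _ => hf0 _ _)
  · intro q
    rw [← Finset.sum_div]
    rcases eq_or_lt_of_le (Finset.sum_nonneg fun z _ => hf0 q.1 (q.2, z)) with h | h
    · rw [← h]; norm_num
    · rw [div_le_one h]
  · intro x y z
    by_cases h : (∑ z', f x (y, z')) = 0
    · have : f x (y, z) = 0 := by
        have := (Finset.sum_eq_zero_iff_of_nonneg (fun z _ => hf0 x (y, z))).mp h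
        exact this z (Finset.mem_univ z)
      simp [this, h]
    · field_simp
end
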